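/- If λ_1, ..., λ_{n-1} ≥ 0 satisfy ∑_{j=1}^{n-1} λ_j ≤ 1/2, then the symmetric matrix P(Λ) = QΛQ^T is doubly stochastic. -/

import Mathlib

open Real Matrix Finset

/-!
The first column of `Q` is constant, `Q k 0 = 1 / √n`, while every other column sums to zero,
being a sum of imaginary parts of `e^{iπ/4} ζ^l` over the powers of an `n`-th root of unity
`ζ ≠ 1`. Hence `P = Q Λ Qᵀ` has row sums `λ₀ · (1/√n) · √n = 1`, and by symmetry column
sums `1`.
For nonnegativity, `P k l = 1/n + ∑_{j ≠ 0} λ_j Q k j Q l j` and `|Q k j| ≤ √(2/n)`, so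
`P k l ≥ 1/n - (2/n) ∑_{j ≠ 0} λ_j ≥ 0`.
-/

theorem sum_sin_two_pi_mul_div_add_eq_zero {n j : ℕ} (hj : j ≠ 0) (hjn : j < n) (φ : ℝ) :
    ∑ l : Fin n, sin (2 * π * l * j / n + φ) = 0 := by
  have hω := Complex.isPrimitiveRoot_exp n (by omega)
  have hζ1 : Complex.exp (2 * π * Complex.I / n) ^ j ≠ 1 := hω.pow_ne_one_of_pos_of_lt hj hjn
  have hζn : (Complex.exp (2 * π * Complex.I / n) ^ j) ^ n = 1 := by
    rw [pow_right_comm, hω.pow_eq_one, one_pow]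
  have hgeom : ∑ l ∈ range n, (Complex.exp (2 * π * Complex.I / n) ^ j) ^ l = 0 := by
    rw [geom_sum_eq hζ1, hζn, sub_self, zero_div]
  have hterm (l : ℕ) : sin (2 * π * l * j / n + φ) =
      (Complex.exp (φ * Complex.I) * (Complex.exp (2 * π * Complex.I / n) ^ j) ^ l).im := by
    rw [← Complex.exp_nat_mul, ← Complex.exp_nat_mul, ← Complex.exp_add,
      ← Complex.exp_ofReal_mul_I_im]
    congr 3
    push_cast
    ring
  rw [Fin.sum_univ_eq_sum_range (fun l => sin (2 * π * l * j / n + φ)),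
    sum_congr rfl fun l _ => hterm l, ← Complex.im_sum, ← mul_sum, hgeom, mul_zero,
    Complex.zero_im]

section

variable {ι : Type*} [Fintype ι] [DecidableEq ι] (Q : Matrix ι ι ℝ) (lam : ι → ℝ)

theorem isSymm_mul_diagonal_mul_transpose : (Q * diagonal lam * Qᵀ).IsSymm := by
  simp only [IsSymm, transpose_mul, transpose_transpose, diagonal_transpose, Matrix.mul_assoc]

theorem mul_diagonal_mul_transpose_apply (k l : ι) :
    (Q * diagonal lam * Qᵀ) k l = ∑ j, lam j * Q k j * Q l j := by
  rw [mul_apply]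
  exact sum_congr rfl fun j _ => by rw [mul_diagonal, transpose_apply]; ring

variable {Q} {j₀ : ι} {c : ℝ}

theorem sum_mul_diagonal_mul_transpose_apply (hcol : ∀ k, Q k j₀ = c)
    (hzero : ∀ j ≠ j₀, ∑ l, Q l j = 0) (k : ι) :
    ∑ l, (Q * diagonal lam * Qᵀ) k l = lam j₀ * c ^ 2 * Fintype.card ι := by
  simp only [mul_diagonal_mul_transpose_apply]
  rw [sum_comm, sum_eq_single j₀ (fun j _ hj => by rw [← mul_sum, hzero j hj, mul_zero])
    (fun h => absurd (mem_univ j₀) h)]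
  simp only [hcol, sum_const, card_univ, nsmul_eq_mul]
  ring

theorem sub_le_mul_diagonal_mul_transpose_apply {b : ℝ} (hcol : ∀ k, Q k j₀ = c)
    (hbound : ∀ k, ∀ j ≠ j₀, |Q k j| ≤ b) (hlam : ∀ j ≠ j₀, 0 ≤ lam j) (k l : ι) :
    lam j₀ * c ^ 2 - b ^ 2 * ∑ j ∈ univ \ {j₀}, lam j ≤ (Q * diagonal lam * Qᵀ) k l := by
  rw [mul_diagonal_mul_transpose_apply,
    sum_eq_add_sum_sdiff_singleton_of_mem (mem_univ j₀), hcol, hcol, mul_sum, sub_eq_add_neg,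
    ← sum_neg_distrib]
  refine add_le_add (le_of_eq (by ring)) (sum_le_sum fun j hj => ?_)
  have hj₀ : j ≠ j₀ := by simpa using hj
  have hQQ : |Q k j * Q l j| ≤ b ^ 2 := by
    rw [abs_mul, sq]
    exact mul_le_mul (hbound k j hj₀) (hbound l j hj₀) (abs_nonneg _)
      ((abs_nonneg _).trans (hbound k j hj₀))
  nlinarith [neg_abs_le (Q k j * Q l j), hlam j hj₀]

theorem mul_diagonal_mul_transpose_mem_doublyStochastic {b : ℝ} (hcol : ∀ k, Q k j₀ = c)
    (hzero : ∀ j ≠ j₀, ∑ l, Q l j = 0) (hbound : ∀ k, ∀ j ≠ j₀, |Q k j| ≤ b)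
    (hlam : ∀ j ≠ j₀, 0 ≤ lam j) (hcard : lam j₀ * c ^ 2 * Fintype.card ι = 1)
    (hsum : b ^ 2 * ∑ j ∈ univ \ {j₀}, lam j ≤ lam j₀ * c ^ 2) :
    Q * diagonal lam * Qᵀ ∈ doublyStochastic ℝ ι := by
  have hrow (k : ι) : ∑ l, (Q * diagonal lam * Qᵀ) k l = 1 := by
    rw [sum_mul_diagonal_mul_transpose_apply lam hcol hzero, hcard]
  refine mem_doublyStochastic_iff_sum.2 ⟨fun k l => ?_, hrow, fun l => ?_⟩
  · exact (sub_nonneg.2 hsum).trans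
      (sub_le_mul_diagonal_mul_transpose_apply lam hcol hbound hlam k l)
  · simpa only [(isSymm_mul_diagonal_mul_transpose Q lam).apply l] using hrow l

end

theorem stmt_11 (n : ℕ) (hn : 1 ≤ n)
    (Q : Matrix (Fin n) (Fin n) ℝ)
    (hQ : ∀ k j : Fin n,
      Q k j = Real.sqrt (2 / n) * Real.sin (2 * Real.pi * k * j / n + Real.pi / 4))
    (lam : Fin n → ℝ) (hlam0 : lam ⟨0, by omega⟩ = 1)
    (hpos : ∀ j : Fin n, j ≠ ⟨0, by omega⟩ → 0 ≤ lam j)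
    (hsum : ∑ j ∈ Finset.univ \ {(⟨0, by omega⟩ : Fin n)}, lam j ≤ 1 / 2) :
    (Q * Matrix.diagonal lam * Qᵀ)ᵀ = Q * Matrix.diagonal lam * Qᵀ ∧
    (∀ k l : Fin n, 0 ≤ (Q * Matrix.diagonal lam * Qᵀ) k l) ∧
    (∀ k : Fin n, ∑ l : Fin n, (Q * Matrix.diagonal lam * Qᵀ) k l = 1) ∧
    (∀ l : Fin n, ∑ k : Fin n, (Q * Matrix.diagonal lam * Qᵀ) k l = 1) := by
  set j₀ : Fin n := ⟨0, by omega⟩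
  have hn₀ : (n : ℝ) ≠ 0 := by positivity
  have hcol (k : Fin n) : Q k j₀ = √(2 / n) * sin (π / 4) := by simp [hQ, j₀]
  have hzero (j : Fin n) (hj : j ≠ j₀) : ∑ l, Q l j = 0 := by
    simp only [hQ]
    rw [← mul_sum, sum_sin_two_pi_mul_div_add_eq_zero (fun h => hj (Fin.ext h)) j.isLt, mul_zero]
  have hbound (k j : Fin n) (_ : j ≠ j₀) : |Q k j| ≤ √(2 / n) := by
    rw [hQ, abs_mul, abs_of_nonneg (sqrt_nonneg _)]
    exact mul_le_of_le_one_right (sqrt_nonneg _) (abs_sin_le_one _)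
  have hc : (√(2 / n) * sin (π / 4)) ^ 2 = 1 / n := by
    rw [mul_pow, sq_sqrt (by positivity), sin_pi_div_four, div_pow, sq_sqrt zero_le_two]
    ring
  have hmem := mul_diagonal_mul_transpose_mem_doublyStochastic lam hcol hzero hbound hpos
    (by rw [hlam0, hc, Fintype.card_fin]; field_simp)
    (by rw [hlam0, hc, sq_sqrt (by positivity)]
        exact (mul_le_mul_of_nonneg_left hsum (by positivity)).trans_eq (by ring))
  obtain ⟨hnonneg, hrow, hcolumn⟩ := mem_doublyStochastic_iff_sum.1 hmem
  exact ⟨isSymm_mul_diagonal_mul_transpose Q lam, hnonneg, hrow, hcolumn⟩
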